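/- arXiv:1812.00146 — 3 statements merged into one kernel-verified Lean document; each statement's English description precedes it below -/
import Mathlib

section
/- Let H be a real Hilbert space, β ∈ (0,∞), I an arbitrary index set, and (x_i, q_i) ∈ H × H for i ∈ I. Then there exists a β-cocoercive map Q : H → H with Q x_i = q_i for all i ∈ I if and only if ⟨x_i − x_j, q_i − q_j⟩ ≥ β‖q_i − q_j‖² for all i, j ∈ I. -/
/-!
`Q` is `β`-cocoercive iff `2β • Q - id` is nonexpansive, so the theorem is Kirszbraun's extension
theorem for nonexpansive maps of a Hilbert space. By Zorn's lemma it suffices to extend by one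
point, i.e. to show that the balls `B(cᵢ, rᵢ)` meet whenever the balls `B(aᵢ, rᵢ)` do and
`‖cᵢ - cⱼ‖ ≤ ‖aᵢ - aⱼ‖`. For finitely many balls, a minimizer `y₀` of `maxᵢ (‖y - cᵢ‖² - rᵢ²)`
is a convex combination `∑ wᵢ cᵢ` of the centres where the maximum `m` is attained, and the
weighted variance of the `cᵢ`, which equals `∑ wᵢ rᵢ² + m`, is at most that of the `aᵢ`, which is
at most `∑ wᵢ rᵢ²`; hence `m ≤ 0`. For infinitely many balls, the minimal-norm points of the
finite intersections form a Cauchy net whose limit lies in every ball.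
-/

open RealInnerProductSpace Set Filter Topology Metric
open scoped NNReal

def Cocoercive {H : Type*} [NormedAddCommGroup H] [InnerProductSpace ℝ H]
    (β : ℝ) (Q : H → H) : Prop :=
  ∀ x y : H, ⟪Q x - Q y, x - y⟫ ≥ β * ‖Q x - Q y‖ ^ 2

section

variable {E F : Type*} [NormedAddCommGroup E] [InnerProductSpace ℝ E] [NormedAddCommGroup F]
  [InnerProductSpace ℝ F]

theorem sum_mul_norm_sub_sq {ι : Type*} {t : Finset ι} {w : ι → ℝ} (hw : ∑ i ∈ t, w i = 1)
    (u : ι → F) (z : F) :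
    ∑ i ∈ t, w i * ‖u i - z‖ ^ 2
      = ∑ i ∈ t, w i * ‖u i‖ ^ 2 - 2 * ⟪∑ i ∈ t, w i • u i, z⟫ + ‖z‖ ^ 2 := by
  simp only [norm_sub_sq_real, mul_add, mul_sub, Finset.sum_add_distrib, Finset.sum_sub_distrib,
    sum_inner, real_inner_smul_left, ← Finset.sum_mul, hw, Finset.mul_sum]
  congr 1
  · congr 1
    exact Finset.sum_congr rfl fun i _ => by ring
  · ring

theorem sum_sum_mul_mul_norm_sub_sq {ι : Type*} {t : Finset ι} {w : ι → ℝ}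
    (hw : ∑ i ∈ t, w i = 1) (u : ι → F) :
    ∑ i ∈ t, ∑ j ∈ t, w i * w j * ‖u i - u j‖ ^ 2
      = 2 * (∑ i ∈ t, w i * ‖u i‖ ^ 2 - ‖∑ i ∈ t, w i • u i‖ ^ 2) := by
  have inner_sum_eq : ∑ i ∈ t, w i * ⟪∑ j ∈ t, w j • u j, u i⟫ = ‖∑ i ∈ t, w i • u i‖ ^ 2 := by
    rw [← real_inner_self_eq_norm_sq, inner_sum]
    exact Finset.sum_congr rfl fun i _ => (real_inner_smul_right _ _ _).symm
  calc ∑ i ∈ t, ∑ j ∈ t, w i * w j * ‖u i - u j‖ ^ 2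
      = ∑ i ∈ t, w i * ∑ j ∈ t, w j * ‖u j - u i‖ ^ 2 := by
        refine Finset.sum_congr rfl fun i _ => ?_
        rw [Finset.mul_sum]
        exact Finset.sum_congr rfl fun j _ => by rw [norm_sub_rev]; ring
    _ = 2 * (∑ i ∈ t, w i * ‖u i‖ ^ 2 - ‖∑ i ∈ t, w i • u i‖ ^ 2) := by
        simp only [sum_mul_norm_sub_sq hw, mul_add, mul_sub, Finset.sum_add_distrib,
          Finset.sum_sub_distrib, ← Finset.sum_mul, hw, one_mul, mul_left_comm _ (2 : ℝ),
          ← Finset.mul_sum, inner_sum_eq]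
        ring

theorem sum_mul_norm_sum_smul_sub_sq_le
    {ι : Type*} {t : Finset ι} {w : ι → ℝ} (hw₀ : ∀ i ∈ t, 0 ≤ w i) (hw : ∑ i ∈ t, w i = 1)
    {A : ι → E} {C : ι → F} (hAC : ∀ i ∈ t, ∀ j ∈ t, ‖C i - C j‖ ≤ ‖A i - A j‖) (p : E) :
    ∑ i ∈ t, w i * ‖∑ j ∈ t, w j • C j - C i‖ ^ 2 ≤ ∑ i ∈ t, w i * ‖p - A i‖ ^ 2 := by
  calc ∑ i ∈ t, w i * ‖∑ j ∈ t, w j • C j - C i‖ ^ 2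
      = (∑ i ∈ t, ∑ j ∈ t, w i * w j * ‖C i - C j‖ ^ 2) / 2 := by
        rw [Finset.sum_congr rfl fun i _ => by rw [norm_sub_rev], sum_mul_norm_sub_sq hw,
          sum_sum_mul_mul_norm_sub_sq hw, real_inner_self_eq_norm_sq]
        ring
    _ ≤ (∑ i ∈ t, ∑ j ∈ t, w i * w j * ‖A i - A j‖ ^ 2) / 2 := by
        gcongr with i hi j hj
        · exact mul_nonneg (hw₀ i hi) (hw₀ j hj)
        · exact hAC i hi j hj
    _ = ∑ i ∈ t, w i * ‖p - A i‖ ^ 2 - ‖∑ j ∈ t, w j • A j - p‖ ^ 2 := by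
        have hA : ∑ i ∈ t, w i * ‖p - A i‖ ^ 2 = ∑ i ∈ t, w i * ‖A i - p‖ ^ 2 :=
          Finset.sum_congr rfl fun i _ => by rw [norm_sub_rev]
        rw [hA, sum_mul_norm_sub_sq hw, sum_sum_mul_mul_norm_sub_sq hw, norm_sub_sq_real]
        ring
    _ ≤ ∑ i ∈ t, w i * ‖p - A i‖ ^ 2 := sub_le_self _ (sq_nonneg _)

theorem norm_add_smul_sub_sub_lt {y z c : F} (hc : ⟪y - z, c - z⟫ ≤ 0) (hyz : y ≠ z) {t : ℝ}
    (ht₀ : 0 < t) (ht₂ : t < 2) : ‖y + t • (z - y) - c‖ < ‖y - c‖ := by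
  have hv : 0 < ‖z - y‖ := norm_pos_iff.2 (sub_ne_zero.2 hyz.symm)
  have hexpand : ‖y + t • (z - y) - c‖ ^ 2
      = ‖y - c‖ ^ 2 + 2 * t * ⟪y - c, z - y⟫ + t ^ 2 * ‖z - y‖ ^ 2 := by
    rw [show y + t • (z - y) - c = (y - c) + t • (z - y) by abel, norm_add_sq_real,
      real_inner_smul_right, norm_smul, Real.norm_eq_abs, mul_pow, sq_abs]
    ring
  have hinner : ⟪y - c, z - y⟫ ≤ -‖z - y‖ ^ 2 := by
    have h₁ : ⟪y - c, z - y⟫ = -‖z - y‖ ^ 2 - ⟪c - z, z - y⟫ := by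
      rw [show y - c = -(z - y) - (c - z) by abel, inner_sub_left, inner_neg_left,
        real_inner_self_eq_norm_sq]
    have h₂ : ⟪c - z, z - y⟫ = -⟪y - z, c - z⟫ := by
      rw [← neg_sub y z, inner_neg_right, real_inner_comm]
    linarith
  refine (sq_lt_sq₀ (norm_nonneg _) (norm_nonneg _)).1 ?_
  rw [hexpand]
  nlinarith [mul_pos (mul_pos ht₀ (sub_pos.2 ht₂)) (pow_pos hv 2)]

theorem mem_convexHull_of_isMinOn_sup'_norm_sub_sq {ι : Type*} {s : Finset ι} (hs : s.Nonempty)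
    {c : ι → F} {ρ : ι → ℝ} {K : Set F} (hK : Convex ℝ K) (hcK : ∀ i ∈ s, c i ∈ K) {y₀ : F}
    (hy₀ : y₀ ∈ K) (hmin : IsMinOn (fun y => s.sup' hs fun i => ‖y - c i‖ ^ 2 - ρ i) K y₀) :
    y₀ ∈ convexHull ℝ
      (c '' {i | i ∈ s ∧ ‖y₀ - c i‖ ^ 2 - ρ i = s.sup' hs fun i => ‖y₀ - c i‖ ^ 2 - ρ i}) := by
  set Φ : F → ℝ := fun y => s.sup' hs fun i => ‖y - c i‖ ^ 2 - ρ i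
  set T := {i | i ∈ s ∧ ‖y₀ - c i‖ ^ 2 - ρ i = Φ y₀}
  -- Otherwise a short step from `y₀` towards its projection `z` onto the hull lowers every
  -- active term and keeps the inactive ones below `Φ y₀`.
  by_contra hout
  have hT : (c '' T).Finite := (s.finite_toSet.subset fun i hi => hi.1).image c
  have hne : (convexHull ℝ (c '' T)).Nonempty := by
    obtain ⟨i, hi, heq⟩ := s.exists_mem_eq_sup' hs fun i => ‖y₀ - c i‖ ^ 2 - ρ i
    exact ⟨c i, subset_convexHull ℝ _ ⟨i, ⟨hi, heq.symm⟩, rfl⟩⟩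
  obtain ⟨z, hz, hzmin⟩ := exists_norm_eq_iInf_of_complete_convex hne
    (hT.isCompact_convexHull (𝕜 := ℝ)).isComplete (convex_convexHull ℝ _) y₀
  have hobtuse := (norm_eq_iInf_iff_real_inner_le_zero (convex_convexHull ℝ _) hz).1 hzmin
  have hzK : z ∈ K := convexHull_min (image_subset_iff.2 fun i hi => hcK i hi.1) hK hz
  have hyz : y₀ ≠ z := fun h => hout (h ▸ hz)
  have hdecr : ∀ i ∈ s, ∀ᶠ t in 𝓝[>] (0 : ℝ), ‖y₀ + t • (z - y₀) - c i‖ ^ 2 - ρ i < Φ y₀ := by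
    intro i hi
    by_cases hiT : i ∈ T
    · filter_upwards [Ioo_mem_nhdsGT two_pos] with t ht
      have := norm_add_smul_sub_sub_lt (hobtuse _ (subset_convexHull ℝ _ ⟨i, hiT, rfl⟩)) hyz
        ht.1 ht.2
      rw [← hiT.2]
      gcongr
    · have hlt : ‖y₀ - c i‖ ^ 2 - ρ i < Φ y₀ :=
        (s.le_sup' (fun i => ‖y₀ - c i‖ ^ 2 - ρ i) hi).lt_of_ne fun h => hiT ⟨hi, h⟩
      have hcont : Continuous fun t : ℝ => ‖y₀ + t • (z - y₀) - c i‖ ^ 2 - ρ i := by fun_prop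
      exact (hcont.tendsto' 0 _ (by simp)).eventually (gt_mem_nhds hlt) |>.filter_mono
        nhdsWithin_le_nhds
  obtain ⟨t, ⟨ht₀, ht₁⟩, hlt⟩ :=
    ((show ∀ᶠ t in 𝓝[>] (0 : ℝ), t ∈ Ioc 0 1 from Ioc_mem_nhdsGT one_pos).and
      ((eventually_all_finset s).2 hdecr)).exists
  exact (isMinOn_iff.1 hmin _ (hK.add_smul_sub_mem hy₀ hzK ⟨ht₀.le, ht₁⟩)).not_gt
    ((s.sup'_lt_iff hs).2 hlt)

theorem nonempty_biInter_closedBall_of_dist_le {ι : Type*} (s : Finset ι) {a : ι → E}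
    {c : ι → F} {r : ι → ℝ} (hc : ∀ i ∈ s, ∀ j ∈ s, dist (c i) (c j) ≤ dist (a i) (a j))
    (ha : (⋂ i ∈ s, closedBall (a i) (r i)).Nonempty) :
    (⋂ i ∈ s, closedBall (c i) (r i)).Nonempty := by
  obtain ⟨p, hp⟩ := ha
  simp only [mem_iInter₂, mem_closedBall, dist_eq_norm] at hp
  rcases s.eq_empty_or_nonempty with rfl | hs
  · simp
  set Φ : F → ℝ := fun y => s.sup' hs fun i => ‖y - c i‖ ^ 2 - r i ^ 2
  obtain ⟨y₀, hy₀, hmin⟩ := ((s.finite_toSet.image c).isCompact_convexHull (𝕜 := ℝ)).exists_isMinOn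
    ((hs.to_set.image c).mono (subset_convexHull ℝ _))
    (f := Φ) (Continuous.finset_sup'_apply hs fun i _ => by fun_prop).continuousOn
  have hhull := mem_convexHull_of_isMinOn_sup'_norm_sub_sq hs (convex_convexHull ℝ _)
    (fun i hi => subset_convexHull ℝ _ (mem_image_of_mem c hi)) hy₀ hmin
  rw [image_eq_range, convexHull_range_eq_exists_affineCombination] at hhull
  obtain ⟨u, w, hw₀, hw₁, hy⟩ := hhull
  rw [u.affineCombination_eq_linear_combination _ _ hw₁] at hy
  have hΦ : Φ y₀ ≤ 0 := by
    have hvar := sum_mul_norm_sum_smul_sub_sq_le hw₀ hw₁ (A := fun i => a i) (C := fun i => c i)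
      (fun i _ j _ => by simpa only [dist_eq_norm] using hc i i.2.1 j j.2.1) p
    rw [hy] at hvar
    suffices ∑ i ∈ u, w i * r i ^ 2 + Φ y₀ ≤ ∑ i ∈ u, w i * r i ^ 2 by linarith
    calc ∑ i ∈ u, w i * r i ^ 2 + Φ y₀ = ∑ i ∈ u, w i * ‖y₀ - c i‖ ^ 2 := by
          rw [← one_mul (Φ y₀), ← hw₁, Finset.sum_mul, ← Finset.sum_add_distrib]
          refine Finset.sum_congr rfl fun i _ => ?_
          have hactive : ‖y₀ - c i‖ ^ 2 - r i ^ 2 = Φ y₀ := i.2.2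
          rw [← mul_add, ← hactive]
          ring
      _ ≤ ∑ i ∈ u, w i * ‖p - a i‖ ^ 2 := hvar
      _ ≤ ∑ i ∈ u, w i * r i ^ 2 := by
          gcongr with i hi
          · exact hw₀ i hi
          · exact hp i i.2.1
  refine ⟨y₀, mem_iInter₂.2 fun i hi => ?_⟩
  have hr : 0 ≤ r i := (norm_nonneg _).trans (hp i hi)
  rw [mem_closedBall, dist_eq_norm, ← sq_le_sq₀ (norm_nonneg _) hr]
  linarith [s.le_sup' (fun i => ‖y₀ - c i‖ ^ 2 - r i ^ 2) hi]

theorem exists_mem_forall_norm_sub_sq_le {K : Set F} (hne : K.Nonempty) (hcomplete : IsComplete K)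
    (hconv : Convex ℝ K) : ∃ v ∈ K, ∀ u ∈ K, ‖u - v‖ ^ 2 ≤ ‖u‖ ^ 2 - ‖v‖ ^ 2 := by
  obtain ⟨v, hv, hmin⟩ := exists_norm_eq_iInf_of_complete_convex hne hcomplete hconv 0
  refine ⟨v, hv, fun u hu => ?_⟩
  have hobtuse := (norm_eq_iInf_iff_real_inner_le_zero hconv hv).1 hmin u hu
  have hu : ‖u‖ ^ 2 = ‖v‖ ^ 2 + 2 * ⟪v, u - v⟫ + ‖u - v‖ ^ 2 := by
    rw [← norm_add_sq_real, add_sub_cancel]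
  rw [zero_sub, inner_neg_left] at hobtuse
  linarith

theorem nonempty_iInter_of_convex_of_isClosed_of_isBounded [CompleteSpace F] {ι : Type*}
    {K : ι → Set F} (hconv : ∀ i, Convex ℝ (K i)) (hclosed : ∀ i, IsClosed (K i))
    (hbdd : ∀ i, Bornology.IsBounded (K i)) (hfin : ∀ s : Finset ι, (⋂ i ∈ s, K i).Nonempty) :
    (⋂ i, K i).Nonempty := by
  classical
  rcases isEmpty_or_nonempty ι with hι | ⟨⟨i₀⟩⟩
  · simp
  choose v hvmem hv using fun s : Finset ι => exists_mem_forall_norm_sub_sq_le (hfin s)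
    (isClosed_biInter fun i _ => hclosed i).isComplete (convex_iInter₂ fun i _ => hconv i)
  have hstep {s t : Finset ι} (hst : s ≤ t) : ‖v t - v s‖ ^ 2 ≤ ‖v t‖ ^ 2 - ‖v s‖ ^ 2 :=
    hv s _ (biInter_subset_biInter_left hst (hvmem t))
  have hmono : Monotone fun s => ‖v s‖ ^ 2 := fun s t hst => by
    linarith [hstep hst, sq_nonneg ‖v t - v s‖]
  obtain ⟨R, hR⟩ := (hbdd i₀).subset_closedBall 0
  have hbddAbove : BddAbove (range fun s => ‖v s‖ ^ 2) := by
    refine ⟨R ^ 2, forall_mem_range.2 fun s => (hmono (Finset.subset_insert i₀ s)).trans ?_⟩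
    have hmem := hR (mem_iInter₂.1 (hvmem (insert i₀ s)) i₀ (Finset.mem_insert_self i₀ s))
    rw [mem_closedBall_zero_iff] at hmem
    exact pow_le_pow_left₀ (norm_nonneg _) hmem 2
  have hcauchy : CauchySeq v := by
    rw [Metric.cauchySeq_iff']
    intro ε hε
    obtain ⟨N, hN⟩ := ((tendsto_atTop_ciSup hmono hbddAbove).eventually
      (lt_mem_nhds (sub_lt_self _ (pow_pos hε 2)))).exists
    refine ⟨N, fun n hn => ?_⟩
    rw [dist_eq_norm, ← sq_lt_sq₀ (norm_nonneg _) hε.le]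
    linarith [hstep hn, le_ciSup hbddAbove n]
  obtain ⟨y, hy⟩ := cauchySeq_tendsto_of_complete hcauchy
  refine ⟨y, mem_iInter.2 fun i => (hclosed i).mem_of_tendsto hy ?_⟩
  filter_upwards [eventually_ge_atTop {i}] with s hs
  exact mem_iInter₂.1 (hvmem s) i (Finset.singleton_subset_iff.1 hs)

theorem nonempty_iInter_closedBall_of_dist_le [CompleteSpace F] {ι : Type*} {a : ι → E}
    {c : ι → F} {r : ι → ℝ} (hc : ∀ i j, dist (c i) (c j) ≤ dist (a i) (a j))
    (ha : (⋂ i, closedBall (a i) (r i)).Nonempty) : (⋂ i, closedBall (c i) (r i)).Nonempty :=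
  nonempty_iInter_of_convex_of_isClosed_of_isBounded (fun _ => convex_closedBall _ _)
    (fun _ => isClosed_closedBall) (fun _ => isBounded_closedBall) fun s =>
      nonempty_biInter_closedBall_of_dist_le s (fun i _ j _ => hc i j)
        (ha.mono fun _ hy => mem_iInter₂.2 fun i _ => mem_iInter.1 hy i)

theorem exists_forall_dist_le_mul_dist [CompleteSpace F] {ι : Type*} {K : ℝ≥0} {a : ι → E}
    {c : ι → F} (hc : ∀ i j, dist (c i) (c j) ≤ K * dist (a i) (a j)) (p : E) :
    ∃ y, ∀ i, dist y (c i) ≤ K * dist p (a i) := by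
  obtain ⟨y, hy⟩ := nonempty_iInter_closedBall_of_dist_le (a := fun i => (K : ℝ) • a i)
    (r := fun i => K * dist p (a i)) (fun i j => by simpa [dist_smul₀] using hc i j)
    ⟨(K : ℝ) • p, mem_iInter.2 fun i => by simp [dist_smul₀]⟩
  exact ⟨y, fun i => mem_iInter.1 hy i⟩

theorem exists_lipschitzWith_apply_eq [CompleteSpace F] {ι : Type*} {K : ℝ≥0} {a : ι → E}
    {c : ι → F} (hc : ∀ i j, dist (c i) (c j) ≤ K * dist (a i) (a j)) :
    ∃ g : E → F, LipschitzWith K g ∧ ∀ i, g (a i) = c i := by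
  let R : E × F → E × F → Prop := fun u v => dist u.2 v.2 ≤ K * dist u.1 v.1
  have hR {D : Set (E × F)} (hD : D.Pairwise R) {u v} (hu : u ∈ D) (hv : v ∈ D) : R u v := by
    rcases eq_or_ne u v with rfl | huv
    · simp [R]
    · exact hD hu hv huv
  obtain ⟨M, hgraph, hM, hmax⟩ := zorn_subset_nonempty {D | D.Pairwise R}
    (fun ch hch hchain _ => ⟨⋃₀ ch, (pairwise_sUnion hchain.directedOn).2 hch,
      fun _ => subset_sUnion_of_mem⟩)
    (range fun i => (a i, c i)) (by rintro _ ⟨i, rfl⟩ _ ⟨j, rfl⟩ _; exact hc i j)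
  have htotal (p : E) : ∃ y, (p, y) ∈ M := by
    obtain ⟨y, hy⟩ := exists_forall_dist_le_mul_dist (a := fun m : M => m.1.1)
      (c := fun m : M => m.1.2) (fun m n => hR hM m.2 n.2) p
    refine ⟨y, hmax (pairwise_insert.2 ⟨hM, fun m hm _ => ⟨hy ⟨m, hm⟩, ?_⟩⟩)
      (subset_insert _ _) (mem_insert _ _)⟩
    simpa only [R, dist_comm] using hy ⟨m, hm⟩
  choose g hg using htotal
  have hfun {p y} (h : (p, y) ∈ M) : g p = y := dist_le_zero.1 (by simpa [R] using hR hM (hg p) h)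
  exact ⟨g, LipschitzWith.of_dist_le_mul fun p q => hR hM (hg p) (hg q),
    fun i => hfun (hgraph ⟨i, rfl⟩)⟩

theorem mul_norm_sq_le_inner_iff {β : ℝ} (hβ : 0 < β) (u v : F) :
    β * ‖v‖ ^ 2 ≤ ⟪v, u⟫ ↔ ‖(2 * β) • v - u‖ ≤ ‖u‖ := by
  rw [← sq_le_sq₀ (norm_nonneg _) (norm_nonneg _), norm_sub_sq_real, norm_smul,
    real_inner_smul_left, Real.norm_eq_abs, abs_of_pos (by positivity), mul_pow]
  constructor <;> intro h <;> nlinarith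

theorem cocoercive_iff_lipschitzWith_one {β : ℝ} (hβ : 0 < β) {Q : F → F} :
    Cocoercive β Q ↔ LipschitzWith 1 fun x => (2 * β) • Q x - x := by
  simp only [Cocoercive, lipschitzWith_iff_dist_le_mul, NNReal.coe_one, one_mul, dist_eq_norm,
    ge_iff_le, mul_norm_sq_le_inner_iff hβ, sub_sub_sub_comm, smul_sub]

end

/-- Interpolation with the class `C_β` of `β`-cocoercive operators:
`{(xᵢ, qᵢ)}` is interpolable by a `β`-cocoercive map `Q : H → H` iff
`⟨xᵢ − xⱼ, qᵢ − qⱼ⟩ ≥ β‖qᵢ − qⱼ‖²` for all `i, j`. -/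
theorem cocoercive_interpolation
    {H : Type*} [NormedAddCommGroup H] [InnerProductSpace ℝ H] [CompleteSpace H]
    {β : ℝ} (hβ : 0 < β) {ι : Type*} (x q : ι → H) :
    (∃ Q : H → H, Cocoercive β Q ∧ ∀ i, Q (x i) = q i) ↔
      ∀ i j, ⟪x i - x j, q i - q j⟫ ≥ β * ‖q i - q j‖ ^ 2 := by
  constructor
  · rintro ⟨Q, hQ, hQx⟩ i j
    simpa only [hQx, real_inner_comm] using hQ (x i) (x j)
  · intro h
    obtain ⟨g, hg, hgx⟩ := exists_lipschitzWith_apply_eq (K := 1) (a := x)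
      (c := fun i => (2 * β) • q i - x i) fun i j => by
        have := (mul_norm_sq_le_inner_iff hβ (x i - x j) (q i - q j)).1
          (by rw [real_inner_comm]; exact h i j)
        simpa only [NNReal.coe_one, one_mul, dist_eq_norm, sub_sub_sub_comm, smul_sub] using this
    have h2β : 2 * β ≠ 0 := by positivity
    refine ⟨fun y => (2 * β)⁻¹ • (g y + y), (cocoercive_iff_lipschitzWith_one hβ).2 ?_,
      fun i => ?_⟩
    · simpa only [smul_inv_smul₀ h2β, add_sub_cancel_right] using hg
    · simp only [hgx, sub_add_cancel, inv_smul_smul₀ h2β]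
end

section
/- Let H be a real Hilbert space and let μ, β ∈ (0,∞) satisfy μ·β ≤ 1. Let (x₁,q₁), (x₂,q₂) ∈ H × H. Then there exists a map Q : H → H that is μ-strongly monotone and β-cocoercive with Q x₁ = q₁ and Q x₂ = q₂ if and only if ⟨x₁ − x₂, q₁ − q₂⟩ ≥ μ‖x₁ − x₂‖² and ⟨x₁ − x₂, q₁ − q₂⟩ ≥ β‖q₁ − q₂‖². -/
/-!
It suffices to find a linear map `A` with `A (x₁ - x₂) = q₁ - q₂` that is `μ`-strongly monotone
and `β`-cocoercive: then `Q a = q₂ + A (a - x₂)` interpolates. For `u = x₁ - x₂ ≠ 0` and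
`w = q₁ - q₂`, take `A` to be `⟪u, w⟫ / ‖u‖²` times the identity plus the skew map
`v ↦ (⟪u, v⟫ w - ⟪w, v⟫ u) / ‖u‖²`. Then `A u = w`, the quadratic form of `A` is that of the
scalar part, and nonnegativity of the Gram determinant of `u, v, w` gives
`‖u‖ ‖A v‖ ≤ ‖w‖ ‖v‖`; so the two inequalities at the data points hold everywhere.
If `u = 0`, cocoercivity forces `w = 0`, and `β⁻¹` times the identity works since `μ β ≤ 1`.
-/

open RealInnerProductSpace

section
variable {H : Type*} [NormedAddCommGroup H] [InnerProductSpace ℝ H]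

theorem gram_det_three_nonneg (u v w : H) :
    ⟪u, v⟫ ^ 2 * ‖w‖ ^ 2 + ⟪v, w⟫ ^ 2 * ‖u‖ ^ 2 + ⟪w, u⟫ ^ 2 * ‖v‖ ^ 2 ≤
      ‖u‖ ^ 2 * ‖v‖ ^ 2 * ‖w‖ ^ 2 + 2 * ⟪u, v⟫ * ⟪v, w⟫ * ⟪w, u⟫ := by
  have h := (Matrix.posSemidef_gram ℝ ![u, v, w]).det_nonneg
  simp only [Matrix.det_fin_three, Matrix.gram_apply, Matrix.cons_val,
    real_inner_self_eq_norm_sq] at h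
  rw [real_inner_comm u v, real_inner_comm v w, real_inner_comm w u] at h
  linarith

noncomputable def twoPointMap (u w : H) : H →ₗ[ℝ] H where
  toFun v := (‖u‖ ^ 2)⁻¹ • (⟪u, w⟫ • v + ⟪u, v⟫ • w - ⟪w, v⟫ • u)
  map_add' v v' := by simp only [inner_add_right]; module
  map_smul' r v := by simp only [real_inner_smul_right, RingHom.id_apply]; module

theorem twoPointMap_apply (u w v : H) :
    twoPointMap u w v = (‖u‖ ^ 2)⁻¹ • (⟪u, w⟫ • v + ⟪u, v⟫ • w - ⟪w, v⟫ • u) := rfl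

theorem twoPointMap_apply_self {u : H} (hu : u ≠ 0) (w : H) : twoPointMap u w u = w := by
  have hU : ‖u‖ ^ 2 ≠ 0 := by positivity
  rw [twoPointMap_apply, real_inner_self_eq_norm_sq, real_inner_comm, add_sub_cancel_left,
    smul_smul, inv_mul_cancel₀ hU, one_smul]

theorem inner_twoPointMap_self (u w v : H) :
    ⟪twoPointMap u w v, v⟫ = ⟪u, w⟫ / ‖u‖ ^ 2 * ‖v‖ ^ 2 := by
  rw [twoPointMap_apply, real_inner_smul_left, inner_sub_left, inner_add_left,
    real_inner_smul_left, real_inner_smul_left, real_inner_smul_left, real_inner_self_eq_norm_sq]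
  ring

theorem norm_sq_mul_norm_twoPointMap_sq_le (u w v : H) :
    ‖u‖ ^ 2 * ‖twoPointMap u w v‖ ^ 2 ≤ ‖w‖ ^ 2 * ‖v‖ ^ 2 := by
  rcases eq_or_ne u 0 with rfl | hu
  · rw [norm_zero, zero_pow two_ne_zero, zero_mul]
    positivity
  have hU : 0 < ‖u‖ ^ 2 := by positivity
  have hexpand : ‖⟪u, w⟫ • v + ⟪u, v⟫ • w - ⟪w, v⟫ • u‖ ^ 2 =
      ⟪u, v⟫ ^ 2 * ‖w‖ ^ 2 + ⟪v, w⟫ ^ 2 * ‖u‖ ^ 2 + ⟪w, u⟫ ^ 2 * ‖v‖ ^ 2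
        - 2 * ⟪u, v⟫ * ⟪v, w⟫ * ⟪w, u⟫ := by
    rw [← real_inner_self_eq_norm_sq, ← real_inner_self_eq_norm_sq u,
      ← real_inner_self_eq_norm_sq v, ← real_inner_self_eq_norm_sq w]
    simp only [inner_add_left, inner_add_right, inner_sub_left, inner_sub_right,
      real_inner_smul_left, real_inner_smul_right]
    rw [real_inner_comm u v, real_inner_comm u w, real_inner_comm v w]
    ring
  calc ‖u‖ ^ 2 * ‖twoPointMap u w v‖ ^ 2
      = (‖u‖ ^ 2)⁻¹ * ‖⟪u, w⟫ • v + ⟪u, v⟫ • w - ⟪w, v⟫ • u‖ ^ 2 := by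
        rw [twoPointMap_apply, norm_smul, mul_pow, norm_inv, norm_pow, norm_norm]
        field_simp
    _ ≤ ‖w‖ ^ 2 * ‖v‖ ^ 2 := by
        rw [inv_mul_le_iff₀ hU, hexpand]
        linarith [gram_det_three_nonneg u v w]

theorem exists_linearMap_apply_eq_of_inner_ge {μ β : ℝ} (hβ : 0 < β) (hμβ : μ * β ≤ 1)
    {u w : H} (hμu : μ * ‖u‖ ^ 2 ≤ ⟪u, w⟫) (hβw : β * ‖w‖ ^ 2 ≤ ⟪u, w⟫) :
    ∃ A : H →ₗ[ℝ] H, A u = w ∧ (∀ v, μ * ‖v‖ ^ 2 ≤ ⟪A v, v⟫) ∧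
      (∀ v, β * ‖A v‖ ^ 2 ≤ ⟪A v, v⟫) := by
  rcases eq_or_ne u 0 with rfl | hu
  · have hw : w = 0 := by
      rw [inner_zero_left] at hβw
      have : ‖w‖ ^ 2 ≤ 0 := nonpos_of_mul_nonpos_right hβw hβ
      simpa using this
    refine ⟨β⁻¹ • LinearMap.id, by rw [hw, map_zero], fun v => ?_, fun v => ?_⟩
    · have hμ : μ ≤ β⁻¹ := by rwa [← one_div, le_div_iff₀ hβ]
      rw [LinearMap.smul_apply, LinearMap.id_apply, real_inner_smul_left,
        real_inner_self_eq_norm_sq]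
      gcongr
    · rw [LinearMap.smul_apply, LinearMap.id_apply, real_inner_smul_left,
        real_inner_self_eq_norm_sq, norm_smul, mul_pow, norm_inv, Real.norm_of_nonneg hβ.le]
      exact le_of_eq (by field_simp)
  have hU : 0 < ‖u‖ ^ 2 := by positivity
  refine ⟨twoPointMap u w, twoPointMap_apply_self hu w, fun v => ?_, fun v => ?_⟩
  · rw [inner_twoPointMap_self]
    gcongr
    rwa [le_div_iff₀ hU]
  · rw [inner_twoPointMap_self, div_mul_eq_mul_div, le_div_iff₀ hU]
    calc β * ‖twoPointMap u w v‖ ^ 2 * ‖u‖ ^ 2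
        = β * (‖u‖ ^ 2 * ‖twoPointMap u w v‖ ^ 2) := by ring
      _ ≤ β * (‖w‖ ^ 2 * ‖v‖ ^ 2) :=
          mul_le_mul_of_nonneg_left (norm_sq_mul_norm_twoPointMap_sq_le u w v) hβ.le
      _ ≤ ⟪u, w⟫ * ‖v‖ ^ 2 := by rw [← mul_assoc]; gcongr

theorem exists_affine_of_linearMap (A : H →ₗ[ℝ] H) {x₁ x₂ q₁ q₂ : H}
    (hA : A (x₁ - x₂) = q₁ - q₂) :
    ∃ Q : H → H, (∀ a b, Q a - Q b = A (a - b)) ∧ Q x₁ = q₁ ∧ Q x₂ = q₂ :=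
  ⟨fun a => q₂ + A (a - x₂), fun a b => by simp only [add_sub_add_left_eq_sub, ← map_sub,
    sub_sub_sub_cancel_right], by simp only [hA, add_sub_cancel], by simp⟩

end

theorem two_point_interpolation_MC_general
    {H : Type*} [NormedAddCommGroup H] [InnerProductSpace ℝ H]
    {μ β : ℝ} (hβ : 0 < β) (hμβ : μ * β ≤ 1)
    (x₁ q₁ x₂ q₂ : H) :
    (∃ Q : H → H,
        (∀ a b : H, ⟪Q a - Q b, a - b⟫ ≥ μ * ‖a - b‖ ^ 2) ∧
        (∀ a b : H, ⟪Q a - Q b, a - b⟫ ≥ β * ‖Q a - Q b‖ ^ 2) ∧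
        Q x₁ = q₁ ∧ Q x₂ = q₂) ↔
      (⟪x₁ - x₂, q₁ - q₂⟫ ≥ μ * ‖x₁ - x₂‖ ^ 2 ∧
       ⟪x₁ - x₂, q₁ - q₂⟫ ≥ β * ‖q₁ - q₂‖ ^ 2) := by
  constructor
  · rintro ⟨Q, hmono, hcoco, rfl, rfl⟩
    rw [real_inner_comm]
    exact ⟨hmono x₁ x₂, hcoco x₁ x₂⟩
  · rintro ⟨hmono, hcoco⟩
    obtain ⟨A, hA, hAmono, hAcoco⟩ := exists_linearMap_apply_eq_of_inner_ge hβ hμβ hmono hcoco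
    obtain ⟨Q, hQ, hQ₁, hQ₂⟩ := exists_affine_of_linearMap A hA
    exact ⟨Q, fun a b => hQ a b ▸ hAmono _, fun a b => hQ a b ▸ hAcoco _, hQ₁, hQ₂⟩

/-- Two-point interpolation with `M_μ ∩ C_β`: `{(x₁,q₁),(x₂,q₂)}` is interpolable by a
`μ`-strongly monotone and `β`-cocoercive map iff the two corresponding inequalities hold. -/
theorem two_point_interpolation_MC
    {H : Type*} [NormedAddCommGroup H] [InnerProductSpace ℝ H] [CompleteSpace H]
    {μ β : ℝ} (hμ : 0 < μ) (hβ : 0 < β) (hμβ : μ * β ≤ 1)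
    (x₁ q₁ x₂ q₂ : H) :
    (∃ Q : H → H,
        (∀ a b : H, ⟪Q a - Q b, a - b⟫ ≥ μ * ‖a - b‖ ^ 2) ∧
        (∀ a b : H, ⟪Q a - Q b, a - b⟫ ≥ β * ‖Q a - Q b‖ ^ 2) ∧
        Q x₁ = q₁ ∧ Q x₂ = q₂) ↔
      (⟪x₁ - x₂, q₁ - q₂⟫ ≥ μ * ‖x₁ - x₂‖ ^ 2 ∧
       ⟪x₁ - x₂, q₁ - q₂⟫ ≥ β * ‖q₁ - q₂‖ ^ 2) :=
  two_point_interpolation_MC_general hβ hμβ x₁ q₁ x₂ q₂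
end

section
/- Let H be a real Hilbert space, μ, β ∈ (0,∞) and θ ∈ (0,2). Let J_A : H → H be a C_β-resolvent and J_B : H → H be an M_μ-resolvent (the roles of the two operator classes are swapped), and let T z = z − θ·J_A z + θ·J_B(2·J_A z − z). Then ‖T z − T z'‖ ≤ ρ(μ,β,θ)·‖z − z'‖ for all z, z' ∈ H, where ρ(μ,β,θ) is the same five-case contraction factor as for the Douglas–Rachford operator built from an M_μ-resolvent and a C_β-resolvent, defined in the context. -/
open RealInnerProductSpace
open scoped Classical

/-- The tight five-case contraction factor for Douglas–Rachford splitting with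
`A` maximal `μ`-strongly monotone and `B` `β`-cocoercive (stepsize `1`, relaxation `θ`). -/
noncomputable def rhoDRS (μ β θ : ℝ) : ℝ :=
  if μ * β - μ + β < 0 ∧
      θ ≤ 2 * (β + 1) * (μ - β - μ * β) / (μ + μ * β - β - β ^ 2 - 2 * μ * β ^ 2) then
    |1 - θ * β / (β + 1)|
  else if μ * β - μ - β > 0 ∧
      θ ≤ 2 * (μ ^ 2 + β ^ 2 + μ * β + μ + β - μ ^ 2 * β ^ 2) /
        (μ ^ 2 + β ^ 2 + μ ^ 2 * β + μ * β ^ 2 + μ + β - 2 * μ ^ 2 * β ^ 2) then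
    |1 - θ * (1 + μ * β) / ((μ + 1) * (β + 1))|
  else if θ ≥ 2 * (μ * β + μ + β) / (2 * μ * β + μ + β) then
    |1 - θ|
  else if μ * β + μ - β < 0 ∧
      θ ≤ 2 * (μ + 1) * (β - μ - μ * β) / (β + μ * β - μ - μ ^ 2 - 2 * μ ^ 2 * β) then
    |1 - θ * μ / (μ + 1)|
  else
    Real.sqrt (2 - θ) / 2 *
      Real.sqrt ((((2 - θ) * μ * (β + 1) + θ * β * (1 - μ)) *
          ((2 - θ) * β * (μ + 1) + θ * μ * (1 - β))) /
        (μ * β * (2 * μ * β * (1 - θ) + (2 - θ) * (μ + β + 1))))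

/-- `J` is the resolvent of a maximal `μ`-strongly monotone operator. -/
def IsMResolvent {H : Type*} [NormedAddCommGroup H] [InnerProductSpace ℝ H]
    (μ : ℝ) (J : H → H) : Prop :=
  ∀ x y : H, ⟪J x - J y, x - y⟫ ≥ (1 + μ) * ‖J x - J y‖ ^ 2

/-- `J` is the resolvent of a `β`-cocoercive operator. -/
def IsCResolvent {H : Type*} [NormedAddCommGroup H] [InnerProductSpace ℝ H]
    (β : ℝ) (J : H → H) : Prop :=
  ∀ x y : H, ⟪(x - J x) - (y - J y), J x - J y⟫ ≥ β * ‖(x - J x) - (y - J y)‖ ^ 2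

/-!
Write `w = z - z'` and `r` for the difference of the reflected points `2 J_A z - z`, `2 J_A z' - z'`.
The cocoercive resolvent makes `n₁ = 2(1+β)(J_A z - J_A z') - (1+2β) w` no longer than `w`, the
strongly monotone one makes `n₂ = 2(1+μ)(J_B (2 J_A z - z) - J_B (2 J_A z' - z')) - r` no longer
than `r`, and `(1+β) r = β w + n₁`. As `2(1+β)(1+μ)(T z - T z')` is a combination of `w, n₁, n₂`, the triangle
inequality bounds it by `f(t) ‖w‖`, where `f(t) = √p(t) + θ √q(t)` with `p, q` affine in the cosine
`t = ⟪w, n₁⟫ / ‖w‖² ∈ [-1, 1]`. Since `f` is concave, in the first four regimes of `ρ` it is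
maximal at an endpoint `t = ±1` (compare with tangent lines); in the last one a weighted
Cauchy–Schwarz inequality whose weights eliminate `t` gives the bound.
-/

section Hilbert

variable {H : Type*} [NormedAddCommGroup H] [InnerProductSpace ℝ H]

theorem IsCResolvent.norm_reflect_sub_le {β : ℝ} {J : H → H} (hJ : IsCResolvent β J)
    (hβ : -1 ≤ β) (x y : H) :
    ‖(2 * (1 + β)) • (J x - J y) - (1 + 2 * β) • (x - y)‖ ≤ ‖x - y‖ := by
  have h := hJ x y
  rw [show x - J x - (y - J y) = (x - y) - (J x - J y) by abel] at h
  set w := x - y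
  set a := J x - J y
  have key : ‖(2 * (1 + β)) • a - (1 + 2 * β) • w‖ ^ 2
      = ‖w‖ ^ 2 - 4 * (1 + β) * (⟪w - a, a⟫ - β * ‖w - a‖ ^ 2) := by
    simp only [← real_inner_self_eq_norm_sq, inner_sub_left, inner_sub_right,
      real_inner_smul_left, real_inner_smul_right, real_inner_comm a w]
    ring
  refine (sq_le_sq₀ (norm_nonneg _) (norm_nonneg _)).1 ?_
  nlinarith

theorem IsMResolvent.norm_reflect_sub_le {μ : ℝ} {J : H → H} (hJ : IsMResolvent μ J)
    (hμ : -1 ≤ μ) (x y : H) :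
    ‖(2 * (1 + μ)) • (J x - J y) - (x - y)‖ ≤ ‖x - y‖ := by
  have h := hJ x y
  set w := x - y
  set a := J x - J y
  have key : ‖(2 * (1 + μ)) • a - w‖ ^ 2 = ‖w‖ ^ 2 - 4 * (1 + μ) * (⟪a, w⟫ - (1 + μ) * ‖a‖ ^ 2) := by
    simp only [← real_inner_self_eq_norm_sq, inner_sub_left, inner_sub_right,
      real_inner_smul_left, real_inner_smul_right, real_inner_comm a w]
    ring
  refine (sq_le_sq₀ (norm_nonneg _) (norm_nonneg _)).1 ?_
  nlinarith

theorem abs_inner_div_norm_sq_le_one {w n : H} (h : ‖n‖ ≤ ‖w‖) : |⟪w, n⟫ / ‖w‖ ^ 2| ≤ 1 := by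
  rw [abs_div, abs_of_nonneg (sq_nonneg ‖w‖)]
  refine div_le_one_of_le₀ ?_ (sq_nonneg _)
  calc |⟪w, n⟫| ≤ ‖w‖ * ‖n‖ := abs_real_inner_le_norm w n
    _ ≤ ‖w‖ ^ 2 := by rw [sq]; exact mul_le_mul_of_nonneg_left h (norm_nonneg w)

theorem norm_smul_add_smul_le {w n : H} (h : ‖n‖ ≤ ‖w‖) (a b : ℝ) :
    ‖a • w + b • n‖ ≤ √(a ^ 2 + b ^ 2 + 2 * a * b * (⟪w, n⟫ / ‖w‖ ^ 2)) * ‖w‖ := by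
  rcases eq_or_ne w 0 with rfl | hw
  · simp [norm_le_zero_iff.1 (by simpa using h)]
  have hw2 : 0 < ‖w‖ ^ 2 := by positivity
  have hn : ‖n‖ ^ 2 ≤ ‖w‖ ^ 2 := by gcongr
  have hsq : ‖a • w + b • n‖ ^ 2 ≤ (a ^ 2 + b ^ 2 + 2 * a * b * (⟪w, n⟫ / ‖w‖ ^ 2)) * ‖w‖ ^ 2 :=
    calc ‖a • w + b • n‖ ^ 2 = a ^ 2 * ‖w‖ ^ 2 + b ^ 2 * ‖n‖ ^ 2 + 2 * a * b * ⟪w, n⟫ := by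
          simp only [← real_inner_self_eq_norm_sq, inner_add_left, inner_add_right,
            real_inner_smul_left, real_inner_smul_right, real_inner_comm n w]
          ring
      _ ≤ a ^ 2 * ‖w‖ ^ 2 + b ^ 2 * ‖w‖ ^ 2 + 2 * a * b * ⟪w, n⟫ := by gcongr
      _ = _ := by field_simp
  calc ‖a • w + b • n‖ = √(‖a • w + b • n‖ ^ 2) := (Real.sqrt_sq (norm_nonneg _)).symm
    _ ≤ √((a ^ 2 + b ^ 2 + 2 * a * b * (⟪w, n⟫ / ‖w‖ ^ 2)) * ‖w‖ ^ 2) := Real.sqrt_le_sqrt hsq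
    _ = _ := by rw [Real.sqrt_mul' _ hw2.le, Real.sqrt_sq (norm_nonneg _)]

def douglasRachford (JA JB : H → H) (θ : ℝ) (z : H) : H :=
  z - θ • JA z + θ • JB ((2 : ℝ) • JA z - z)

/-- The coefficient `2(1+β)(1+μ) - θ(1+μ+β+2μβ)` of `z - z'` in `2(1+β)(1+μ)(T z - T z')`, written
as it appears in the last branch of `rhoDRS`. -/
noncomputable def drsCoeff (μ β θ : ℝ) : ℝ := 2 * μ * β * (1 - θ) + (2 - θ) * (μ + β + 1)

noncomputable def drsMajorant (μ β θ t : ℝ) : ℝ :=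
  √(drsCoeff μ β θ ^ 2 + (θ * μ) ^ 2 - 2 * drsCoeff μ β θ * (θ * μ) * t) +
    θ * √(β ^ 2 + 1 + 2 * β * t)

theorem exists_norm_douglasRachford_sub_le {μ β θ : ℝ} {JA JB : H → H} (hJA : IsCResolvent β JA)
    (hJB : IsMResolvent μ JB) (hμ : -1 ≤ μ) (hβ : -1 ≤ β) (hθ : 0 ≤ θ) (z z' : H) :
    ∃ t, |t| ≤ 1 ∧ 2 * (1 + β) * (1 + μ) *
      ‖douglasRachford JA JB θ z - douglasRachford JA JB θ z'‖ ≤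
        drsMajorant μ β θ t * ‖z - z'‖ := by
  have hμ' : 0 ≤ 1 + μ := by linarith
  have hβ' : 0 ≤ 1 + β := by linarith
  set w := z - z'
  set r := ((2 : ℝ) • JA z - z) - ((2 : ℝ) • JA z' - z')
  set n₁ := (2 * (1 + β)) • (JA z - JA z') - (1 + 2 * β) • w
  set n₂ := (2 * (1 + μ)) • (JB ((2 : ℝ) • JA z - z) - JB ((2 : ℝ) • JA z' - z')) - r
  have hn₁ : ‖n₁‖ ≤ ‖w‖ := hJA.norm_reflect_sub_le hβ z z'
  have hn₂ : ‖n₂‖ ≤ ‖r‖ := hJB.norm_reflect_sub_le hμ _ _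
  have hr : (1 + β) • r = β • w + (1 : ℝ) • n₁ := by simp only [r, n₁, w]; module
  have hT : (2 * (1 + β) * (1 + μ)) •
      (douglasRachford JA JB θ z - douglasRachford JA JB θ z') =
      drsCoeff μ β θ • w + (-(θ * μ)) • n₁ + (θ * (1 + β)) • n₂ := by
    simp only [douglasRachford, drsCoeff, n₂, n₁, r, w]; module
  refine ⟨⟪w, n₁⟫ / ‖w‖ ^ 2, abs_inner_div_norm_sq_le_one hn₁, ?_⟩
  calc 2 * (1 + β) * (1 + μ) * ‖douglasRachford JA JB θ z - douglasRachford JA JB θ z'‖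
      = ‖drsCoeff μ β θ • w + (-(θ * μ)) • n₁ + (θ * (1 + β)) • n₂‖ := by
        rw [← hT, norm_smul, Real.norm_of_nonneg (by positivity)]
    _ ≤ ‖drsCoeff μ β θ • w + (-(θ * μ)) • n₁‖ + θ * ‖β • w + (1 : ℝ) • n₁‖ := by
        refine (norm_add_le _ _).trans (add_le_add_right ?_ _)
        rw [← hr, norm_smul, norm_smul, Real.norm_of_nonneg (by positivity),
          Real.norm_of_nonneg hβ', mul_assoc]
        gcongr
    _ ≤ _ := by
        grw [norm_smul_add_smul_le hn₁, norm_smul_add_smul_le hn₁]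
        refine le_of_eq ?_
        rw [drsMajorant]
        ring_nf

end Hilbert

section Scalar

variable {μ β θ t : ℝ}

theorem sqrt_add_mul_sqrt_le_of_tangent {x y s₁ s₂ θ : ℝ} (hx : 0 ≤ x) (hy : 0 ≤ y)
    (hs₁ : 0 < s₁) (hs₂ : 0 < s₂) (hθ : 0 ≤ θ)
    (h : s₂ * (x - s₁ ^ 2) + θ * s₁ * (y - s₂ ^ 2) ≤ 0) :
    √x + θ * √y ≤ s₁ + θ * s₂ := by
  have hx' : 2 * s₁ * √x ≤ x + s₁ ^ 2 := by
    nlinarith [sq_nonneg (√x - s₁), Real.sq_sqrt hx]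
  have hy' : 2 * s₂ * √y ≤ y + s₂ ^ 2 := by
    nlinarith [sq_nonneg (√y - s₂), Real.sq_sqrt hy]
  refine le_of_mul_le_mul_left ?_ (by positivity : 0 < 2 * s₁ * s₂)
  nlinarith [mul_le_mul_of_nonneg_left hx' hs₂.le,
    mul_le_mul_of_nonneg_left hy' (mul_nonneg hθ hs₁.le)]

theorem drsMajorant_le_of_slope_nonneg (hβ : -1 < β) (hθ : 0 ≤ θ) (ht : |t| ≤ 1)
    (hne : drsCoeff μ β θ ≠ θ * μ)
    (hslope : drsCoeff μ β θ * μ * (1 + β) ≤ β * |drsCoeff μ β θ - θ * μ|) :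
    drsMajorant μ β θ t ≤ |drsCoeff μ β θ - θ * μ| + θ * (1 + β) := by
  obtain ⟨ht₁, ht₂⟩ := abs_le.1 ht
  set A := drsCoeff μ β θ
  refine sqrt_add_mul_sqrt_le_of_tangent ?_ ?_ (abs_pos.2 (sub_ne_zero.2 hne)) (by linarith) hθ ?_
  · nlinarith [sq_nonneg (A - θ * μ), sq_nonneg (A + θ * μ)]
  · nlinarith [sq_nonneg (β - 1), sq_nonneg (β + 1)]
  · rw [sq_abs]
    nlinarith [mul_nonneg (mul_nonneg hθ (sub_nonneg.2 ht₂)) (sub_nonneg.2 hslope)]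

theorem drsMajorant_le_of_slope_nonpos (hθ : 0 ≤ θ) (ht : |t| ≤ 1)
    (hpos : 0 < drsCoeff μ β θ + θ * μ) (hβ : β ≠ 1)
    (hslope : β * (drsCoeff μ β θ + θ * μ) ≤ drsCoeff μ β θ * μ * |β - 1|) :
    drsMajorant μ β θ t ≤ drsCoeff μ β θ + θ * μ + θ * |β - 1| := by
  obtain ⟨ht₁, ht₂⟩ := abs_le.1 ht
  set A := drsCoeff μ β θ
  refine sqrt_add_mul_sqrt_le_of_tangent ?_ ?_ hpos (abs_pos.2 (sub_ne_zero.2 hβ)) hθ ?_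
  · nlinarith [sq_nonneg (A - θ * μ), sq_nonneg (A + θ * μ)]
  · nlinarith [sq_nonneg (β - 1), sq_nonneg (β + 1)]
  · rw [sq_abs]
    nlinarith [mul_nonneg (mul_nonneg hθ (neg_le_iff_add_nonneg.1 ht₁)) (sub_nonneg.2 hslope)]

theorem drsMajorant_le_of_drsCoeff_pos (hμ : 0 < μ) (hβ : 0 < β) (hθ : 0 < θ)
    (hA : 0 < drsCoeff μ β θ) (ht : |t| ≤ 1) :
    drsMajorant μ β θ t ≤ 2 * (1 + β) * (1 + μ) *
      (√(2 - θ) / 2 * √((((2 - θ) * μ * (β + 1) + θ * β * (1 - μ)) *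
          ((2 - θ) * β * (μ + 1) + θ * μ * (1 - β))) / (μ * β * drsCoeff μ β θ))) := by
  set A := drsCoeff μ β θ with hA_def
  set F₁ := (2 - θ) * μ * (β + 1) + θ * β * (1 - μ)
  set F₂ := (2 - θ) * β * (μ + 1) + θ * μ * (1 - β)
  set p := A ^ 2 + (θ * μ) ^ 2 - 2 * A * (θ * μ) * t
  set q := β ^ 2 + 1 + 2 * β * t
  obtain ⟨ht₁, ht₂⟩ := abs_le.1 ht
  have hF₁ : (1 + μ) * F₁ = θ * β + A * μ := by rw [hA_def, drsCoeff]; ring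
  have hF₂ : (1 + β) * F₂ = β * A + θ * μ := by rw [hA_def, drsCoeff]; ring
  have hθ₂ : A + θ * β * μ = (1 + β) * (1 + μ) * (2 - θ) := by rw [hA_def, drsCoeff]; ring
  have hF₁_pos : 0 < F₁ := by nlinarith [mul_pos hA hμ, mul_pos hθ hβ]
  have hF₂_pos : 0 < F₂ := by nlinarith [mul_pos hA hβ, mul_pos hθ hμ]
  have h2θ : 0 < 2 - θ := by nlinarith [mul_pos (mul_pos hθ hβ) hμ]
  have hp : 0 ≤ p := by nlinarith [sq_nonneg (A - θ * μ), sq_nonneg (A + θ * μ)]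
  have hq : 0 ≤ q := by nlinarith [sq_nonneg (β - 1), sq_nonneg (β + 1)]
  -- Cauchy–Schwarz with weights `θβ` and `Aμ`, chosen so that the terms in `t` cancel.
  have hcs : θ * β * (A * μ) * (√p + θ * √q) ^ 2 ≤
      (θ * β + A * μ) * (θ * β * √p ^ 2 + A * μ * (θ * √q) ^ 2) := by
    nlinarith [sq_nonneg (θ * β * √p - A * μ * (θ * √q))]
  rw [Real.sq_sqrt hp, mul_pow, Real.sq_sqrt hq,
    show θ * β * p + A * μ * (θ ^ 2 * q) = θ * (β * A + θ * μ) * (A + θ * β * μ) by ring,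
    ← hF₁, ← hF₂, hθ₂] at hcs
  have hlhs : 0 ≤ √p + θ * √q := by positivity
  refine (sq_le_sq₀ hlhs (by positivity)).1 ?_
  refine le_of_mul_le_mul_left (hcs.trans_eq ?_) (by positivity : 0 < θ * β * (A * μ))
  simp only [mul_pow, div_pow]
  rw [Real.sq_sqrt h2θ.le, Real.sq_sqrt (by positivity)]
  field_simp

theorem drsMajorant_le_case₁ (hμ : 0 < μ) (hβ : 0 < β) (hθ : 0 < θ) (ht : |t| ≤ 1)
    (hθ₂ : θ < 2) (h₁ : μ * β - μ + β < 0)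
    (hθd : θ ≤ 2 * (β + 1) * (μ - β - μ * β) / (μ + μ * β - β - β ^ 2 - 2 * μ * β ^ 2)) :
    drsMajorant μ β θ t ≤ 2 * (1 + β) * (1 + μ) * |1 - θ * β / (β + 1)| := by
  set A := drsCoeff μ β θ with hA_def
  have hβ₁ : β < 1 := by nlinarith
  have hden : 0 < μ + μ * β - β - β ^ 2 - 2 * μ * β ^ 2 := by
    nlinarith [mul_pos (mul_pos hμ hβ) (sub_pos.2 hβ₁)]
  have hslope : A * (μ - μ * β - β) - θ * μ * β =
      (1 + μ) * (2 * (β + 1) * (μ - β - μ * β) - θ * (μ + μ * β - β - β ^ 2 - 2 * μ * β ^ 2)) := by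
    rw [hA_def, drsCoeff]; ring
  have hslope' : 0 ≤ A * (μ - μ * β - β) - θ * μ * β := by
    rw [hslope]; have := (le_div_iff₀ hden).1 hθd; positivity
  have hA : 0 < A := by nlinarith [mul_pos (mul_pos hθ hμ) hβ]
  calc drsMajorant μ β θ t ≤ A + θ * μ + θ * |β - 1| :=
        drsMajorant_le_of_slope_nonpos hθ.le ht (by positivity) hβ₁.ne
          (by rw [abs_of_neg (by linarith)]; nlinarith)
    _ = _ := by
        rw [abs_of_neg (by linarith), abs_of_nonneg, hA_def, drsCoeff]
        · field_simp; ring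
        · rw [sub_nonneg, div_le_one (by linarith)]; nlinarith

theorem drsMajorant_le_case₂ (hμ : 0 < μ) (hβ : 0 < β) (hθ : 0 < θ) (ht : |t| ≤ 1)
    (h₂ : μ * β - μ - β > 0)
    (hθd : θ ≤ 2 * (μ ^ 2 + β ^ 2 + μ * β + μ + β - μ ^ 2 * β ^ 2) /
        (μ ^ 2 + β ^ 2 + μ ^ 2 * β + μ * β ^ 2 + μ + β - 2 * μ ^ 2 * β ^ 2)) :
    drsMajorant μ β θ t ≤
      2 * (1 + β) * (1 + μ) * |1 - θ * (1 + μ * β) / ((μ + 1) * (β + 1))| := by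
  set A := drsCoeff μ β θ with hA_def
  have hβ₁ : 1 < β := by nlinarith
  have hden : μ ^ 2 + β ^ 2 + μ ^ 2 * β + μ * β ^ 2 + μ + β - 2 * μ ^ 2 * β ^ 2 < 0 := by
    nlinarith [mul_pos (mul_pos hμ hβ) h₂]
  have hslope : A * (μ * β - μ - β) - θ * μ * β =
      θ * (μ ^ 2 + β ^ 2 + μ ^ 2 * β + μ * β ^ 2 + μ + β - 2 * μ ^ 2 * β ^ 2) -
        2 * (μ ^ 2 + β ^ 2 + μ * β + μ + β - μ ^ 2 * β ^ 2) := by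
    rw [hA_def, drsCoeff]; ring
  have hslope' : 0 ≤ A * (μ * β - μ - β) - θ * μ * β := by
    rw [hslope]; have := (le_div_iff_of_neg hden).1 hθd; linarith
  have hA : 0 < A := by nlinarith [mul_pos (mul_pos hθ hμ) hβ]
  have hval : A + θ * μ + θ * (β - 1) = 2 * (1 + β) * (1 + μ) - 2 * θ * (1 + μ * β) := by
    rw [hA_def, drsCoeff]; ring
  calc drsMajorant μ β θ t ≤ A + θ * μ + θ * |β - 1| :=
        drsMajorant_le_of_slope_nonpos hθ.le ht (by positivity) hβ₁.ne'
          (by rw [abs_of_pos (by linarith)]; nlinarith)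
    _ = _ := by
        rw [abs_of_pos (by linarith), abs_of_nonneg, hval]
        · field_simp; ring
        · rw [sub_nonneg, div_le_one (by positivity)]; nlinarith

theorem drsMajorant_le_case₃ (hμ : 0 < μ) (hβ : 0 < β) (hθ : 0 < θ) (ht : |t| ≤ 1)
    (hθd : θ ≥ 2 * (μ * β + μ + β) / (2 * μ * β + μ + β)) :
    drsMajorant μ β θ t ≤ 2 * (1 + β) * (1 + μ) * |1 - θ| := by
  set A := drsCoeff μ β θ with hA_def
  have hslope : β * (θ * μ - A) - A * μ * (1 + β) =
      (1 + μ) * (1 + β) * (θ * (2 * μ * β + μ + β) - 2 * (μ * β + μ + β)) := by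
    rw [hA_def, drsCoeff]; ring
  have hslope' : A * μ * (1 + β) ≤ β * (θ * μ - A) := by
    have := (div_le_iff₀ (by positivity)).1 hθd
    nlinarith [mul_pos (add_pos one_pos hμ) (add_pos one_pos hβ)]
  have hgap : 0 < θ * μ - A := by
    by_contra! h
    nlinarith [mul_pos hθ hμ, mul_pos hμ (add_pos one_pos hβ)]
  have hval : θ * μ - A + θ * (1 + β) = 2 * (1 + β) * (1 + μ) * (θ - 1) := by
    rw [hA_def, drsCoeff]; ring
  calc drsMajorant μ β θ t ≤ |A - θ * μ| + θ * (1 + β) :=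
        drsMajorant_le_of_slope_nonneg (by linarith) hθ.le ht (by linarith)
          (by rwa [abs_sub_comm, abs_of_pos hgap])
    _ = _ := by
        rw [abs_sub_comm, abs_of_pos hgap, hval, abs_sub_comm, abs_of_pos]
        nlinarith [mul_pos hβ hμ]

theorem drsMajorant_le_case₄ (hμ : 0 < μ) (hβ : 0 < β) (hθ : 0 < θ) (ht : |t| ≤ 1)
    (h₄ : μ * β + μ - β < 0)
    (hθd : θ ≤ 2 * (μ + 1) * (β - μ - μ * β) / (β + μ * β - μ - μ ^ 2 - 2 * μ ^ 2 * β)) :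
    drsMajorant μ β θ t ≤ 2 * (1 + β) * (1 + μ) * |1 - θ * μ / (μ + 1)| := by
  set A := drsCoeff μ β θ with hA_def
  have hμ₁ : μ < 1 := by nlinarith
  have hden : 0 < β + μ * β - μ - μ ^ 2 - 2 * μ ^ 2 * β := by
    nlinarith [mul_pos (mul_pos hμ hβ) (sub_pos.2 hμ₁)]
  have hslope : β * (A - θ * μ) - A * μ * (1 + β) =
      (1 + β) * (2 * (μ + 1) * (β - μ - μ * β) - θ * (β + μ * β - μ - μ ^ 2 - 2 * μ ^ 2 * β)) := by
    rw [hA_def, drsCoeff]; ring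
  have hslope' : A * μ * (1 + β) ≤ β * (A - θ * μ) := by
    have := (le_div_iff₀ hden).1 hθd
    nlinarith
  have hA : 0 < A := by nlinarith [mul_pos (mul_pos hθ hμ) hβ]
  have hgap : 0 < A - θ * μ := by nlinarith [mul_pos (mul_pos hA hμ) hβ]
  have hval : A - θ * μ + θ * (1 + β) = 2 * (1 + β) * (1 + μ) * (1 - θ * μ / (μ + 1)) := by
    rw [hA_def, drsCoeff]; field_simp; ring
  calc drsMajorant μ β θ t ≤ |A - θ * μ| + θ * (1 + β) :=
        drsMajorant_le_of_slope_nonneg (by linarith) hθ.le ht (sub_ne_zero.1 hgap.ne')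
          (by rwa [abs_of_pos hgap])
    _ = _ := by
        have hpos : 0 < 2 * (1 + β) * (1 + μ) * (1 - θ * μ / (μ + 1)) :=
          hval ▸ add_pos hgap (by positivity)
        rw [abs_of_pos hgap, hval, abs_of_pos (pos_of_mul_pos_right hpos (by positivity))]

theorem drsCoeff_pos (hμ : 0 < μ) (hβ : 0 < β)
    (hθ : θ < 2 * (μ * β + μ + β) / (2 * μ * β + μ + β)) : 0 < drsCoeff μ β θ := by
  have hθZ := (lt_div_iff₀ (by positivity)).1 hθ
  have hA : drsCoeff μ β θ * (2 * μ * β + μ + β) =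
      2 * μ * β + (1 + μ + β + 2 * μ * β) * (2 * (μ * β + μ + β) - θ * (2 * μ * β + μ + β)) := by
    rw [drsCoeff]; ring
  have hgap := sub_pos.2 hθZ
  have hprod : 0 < drsCoeff μ β θ * (2 * μ * β + μ + β) := by rw [hA]; positivity
  exact pos_of_mul_pos_left hprod (by positivity)

theorem drsMajorant_le_rhoDRS (hμ : 0 < μ) (hβ : 0 < β) (hθ : 0 < θ) (hθ₂ : θ < 2)
    (ht : |t| ≤ 1) : drsMajorant μ β θ t ≤ 2 * (1 + β) * (1 + μ) * rhoDRS μ β θ := by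
  unfold rhoDRS
  split_ifs with h₁ h₂ h₃ h₄
  · exact drsMajorant_le_case₁ hμ hβ hθ ht hθ₂ h₁.1 h₁.2
  · exact drsMajorant_le_case₂ hμ hβ hθ ht h₂.1 h₂.2
  · exact drsMajorant_le_case₃ hμ hβ hθ ht h₃
  · exact drsMajorant_le_case₄ hμ hβ hθ ht h₄.1 h₄.2
  · exact drsMajorant_le_of_drsCoeff_pos hμ hβ hθ (drsCoeff_pos hμ hβ (not_le.1 h₃)) ht

end Scalar

theorem DRS_contraction_coco_strmonotone_swapped_general
    {H : Type*} [NormedAddCommGroup H] [InnerProductSpace ℝ H]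
    {μ β θ : ℝ} (hμ : 0 < μ) (hβ : 0 < β) (hθ₀ : 0 < θ) (hθ₂ : θ < 2)
    (JA JB : H → H) (hJA : IsCResolvent β JA) (hJB : IsMResolvent μ JB)
    (T : H → H) (hT : ∀ z, T z = z - θ • JA z + θ • JB ((2 : ℝ) • JA z - z)) :
    ∀ z z' : H, ‖T z - T z'‖ ≤ rhoDRS μ β θ * ‖z - z'‖ := by
  intro z z'
  obtain ⟨t, ht, hle⟩ := exists_norm_douglasRachford_sub_le hJA hJB (by linarith) (by linarith)
    hθ₀.le z z'
  rw [show T = douglasRachford JA JB θ from funext hT]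
  refine le_of_mul_le_mul_left ?_ (by positivity : (0 : ℝ) < 2 * (1 + β) * (1 + μ))
  calc _ ≤ drsMajorant μ β θ t * ‖z - z'‖ := hle
    _ ≤ 2 * (1 + β) * (1 + μ) * rhoDRS μ β θ * ‖z - z'‖ := by
        gcongr
        exact drsMajorant_le_rhoDRS hμ hβ hθ₀ hθ₂ ht
    _ = _ := mul_assoc _ _ _

/-- Self-duality of DRS: with the roles of the two operator classes swapped
(`A ∈ C_β`, `B ∈ M_μ`), the Douglas–Rachford operator has the same tight contraction
factor `rhoDRS μ β θ`. -/
theorem DRS_contraction_coco_strmonotone_swapped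
    {H : Type*} [NormedAddCommGroup H] [InnerProductSpace ℝ H] [CompleteSpace H]
    {μ β θ : ℝ} (hμ : 0 < μ) (hβ : 0 < β) (hθ₀ : 0 < θ) (hθ₂ : θ < 2)
    (JA JB : H → H) (hJA : IsCResolvent β JA) (hJB : IsMResolvent μ JB)
    (T : H → H) (hT : ∀ z, T z = z - θ • JA z + θ • JB ((2 : ℝ) • JA z - z)) :
    ∀ z z' : H, ‖T z - T z'‖ ≤ rhoDRS μ β θ * ‖z - z'‖ :=
  DRS_contraction_coco_strmonotone_swapped_general hμ hβ hθ₀ hθ₂ JA JB hJA hJB T hT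
end
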